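/- For any positive semi-definite matrix $M$, $\operatorname{tr}(\sqrt{M}) \le \sum_i \sqrt{M_{ii}}$, i.e., the trace of the positive square root is at most the sum of the square roots of the diagonal entries. -/

import Mathlib

/-
Let `S = √M`. Since `S` is Hermitian with `S * S = M`, each diagonal entry of `M` is the squared
norm of a row of `S`: `Mᵢᵢ = ∑ⱼ ‖Sᵢⱼ‖²`. Hence `re Sᵢᵢ ≤ ‖Sᵢᵢ‖ ≤ √(Mᵢᵢ)`, and summing over `i`
bounds the trace.
-/

open Matrix
open scoped ComplexOrder

/-- `Matrix.PosSemidef.sqrt` as defined in Mathlib of December 2024 (removed since). -/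
noncomputable def Matrix.PosSemidef.sqrt {n 𝕜 : Type*} [Fintype n] [DecidableEq n] [RCLike 𝕜]
    {A : Matrix n n 𝕜} (hA : A.PosSemidef) : Matrix n n 𝕜 :=
  hA.1.eigenvectorUnitary.1 * diagonal ((↑) ∘ Real.sqrt ∘ hA.1.eigenvalues) *
    (star hA.1.eigenvectorUnitary : Matrix n n 𝕜)

open scoped MatrixOrder

namespace Matrix

variable {n 𝕜 : Type*} [Fintype n] [RCLike 𝕜]

theorem PosSemidef.sqrt_eq_cfcSqrt [DecidableEq n] {A : Matrix n n 𝕜} (hA : A.PosSemidef) :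
    hA.sqrt = CFC.sqrt A := by
  rw [CFC.sqrt_eq_cfc, cfc_nnreal_eq_real _ A, hA.1.cfc_eq]
  simp [IsHermitian.cfc, PosSemidef.sqrt, Function.comp_def, hA.eigenvalues_nonneg]

theorem PosSemidef.sqrt_mul_conjTranspose_sqrt [DecidableEq n] {A : Matrix n n 𝕜}
    (hA : A.PosSemidef) : hA.sqrt * hA.sqrtᴴ = A := by
  rw [hA.sqrt_eq_cfcSqrt, ← star_eq_conjTranspose, (CFC.sqrt_nonneg A).isSelfAdjoint.star_eq,
    CFC.sqrt_mul_sqrt_self A hA.nonneg]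

theorem re_apply_self_le_sqrt_re_mul_conjTranspose_apply_self (S : Matrix n n 𝕜) (i : n) :
    RCLike.re (S i i) ≤ √(RCLike.re ((S * Sᴴ) i i)) := by
  have hrow : RCLike.re ((S * Sᴴ) i i) = ∑ j, ‖S i j‖ ^ 2 := by
    simp [mul_apply, RCLike.mul_conj]
  calc RCLike.re (S i i) ≤ ‖S i i‖ := RCLike.re_le_norm _
    _ = √(‖S i i‖ ^ 2) := (Real.sqrt_sq (norm_nonneg _)).symm
    _ ≤ √(∑ j, ‖S i j‖ ^ 2) :=
      Real.sqrt_le_sqrt (Finset.single_le_sum (fun j _ ↦ sq_nonneg ‖S i j‖) (Finset.mem_univ i))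
    _ = √(RCLike.re ((S * Sᴴ) i i)) := by rw [hrow]

theorem re_trace_le_sum_sqrt_re_mul_conjTranspose_apply_self (S : Matrix n n 𝕜) :
    RCLike.re S.trace ≤ ∑ i, √(RCLike.re ((S * Sᴴ) i i)) := by
  rw [trace, map_sum]
  exact Finset.sum_le_sum fun i _ ↦ S.re_apply_self_le_sqrt_re_mul_conjTranspose_apply_self i

end Matrix

/-- For any positive semi-definite matrix `M`, `tr √M ≤ ∑ᵢ √(Mᵢᵢ)`. -/
theorem stmt15 {m : ℕ} (M : Matrix (Fin m) (Fin m) ℂ) (hM : M.PosSemidef) :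
    (hM.sqrt.trace).re ≤ ∑ i, Real.sqrt (M i i).re := by
  have h := hM.sqrt.re_trace_le_sum_sqrt_re_mul_conjTranspose_apply_self
  rwa [hM.sqrt_mul_conjTranspose_sqrt] at h
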